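/- Let G be a quantitative reachability game with players P = {0,1,…,t} and initial vertex v_0. A play π from v_0 is the outcome of a σ_0-fixed Nash equilibrium for some strategy σ_0 of player 0 if and only if π is Visit Val*-consistent for P∖{0}, i.e., for every player i ∈ P∖{0} and every n ∈ ℕ, if π_n ∈ V_i and i ∉ Visit(π_0⋯π_{n−1}), then cost_i(π_nπ_{n+1}⋯) ≤ Val_i(π_n). -/

import Mathlib

/-! If `π` gave some player `i ≠ 0`, from a vertex `π n` of his reached before `T i`, more than
`Val_i (π n)`, he could switch at `π n` to a strategy guaranteeing less; the prefixes up to `π n`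
coincide, so this strictly lowers his cost and the profile is no equilibrium.

Conversely, on a finite arena value iteration for the zero-sum game "`i` against everybody"
stabilises, and a successor maximising `w i + value` at each coalition vertex is a positional
strategy holding `i` to at least `Val_i`. Let everybody follow `π` and, after the first
deviation, punish its author with that strategy: deviating at `π n` then costs `i` at least
`Val_i (π n)` from `π n` on, which by consistency is no better than following `π`. -/

open scoped Classical

/-- An infinite play in the graph with edge relation `E`. -/
def IsPlay {V : Type*} (E : V → V → Prop) (π : ℕ → V) : Prop :=
  ∀ k, E (π k) (π (k + 1))

/-- The history `π 0, …, π k` as a list. -/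
def histList {V : Type*} (π : ℕ → V) (k : ℕ) : List V :=
  (List.range (k + 1)).map π

/-- The accumulated weight of the first `n` edges of `π`. -/
def pathWeight {V : Type*} (w : V → V → ℕ) (π : ℕ → V) (n : ℕ) : ℕ :=
  ∑ j ∈ Finset.range n, w (π j) (π (j + 1))

/-- The cost of a play for weight function `w` and target set `T`. -/
noncomputable def cost {V : Type*} (w : V → V → ℕ) (T : Set V) (π : ℕ → V) : ℕ∞ :=
  if h : ∃ n, π n ∈ T then (pathWeight w π (Nat.find h) : ℕ∞) else ⊤

/-- `σ` is a strategy for player `i` in a game where `own v` is the owner of `v`. -/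
def IsStrategyFor {V P : Type*} (E : V → V → Prop) (own : V → P) (i : P)
    (σ : List V → V) : Prop :=
  ∀ (l : List V) (u : V), List.Chain' E (l ++ [u]) → own u = i → E u (σ (l ++ [u]))

/-- A play is consistent with the strategy `σ` of player `i`. -/
def ConsistentFor {V P : Type*} (own : V → P) (i : P) (σ : List V → V)
    (π : ℕ → V) : Prop :=
  ∀ k, own (π k) = i → π (k + 1) = σ (histList π k)

/-- A play is the outcome of the strategy profile `σ`: at each step the owner's
strategy chooses the next vertex. -/
def ProfConsistent {V P : Type*} (own : V → P) (σ : P → List V → V)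
    (π : ℕ → V) : Prop :=
  ∀ k, π (k + 1) = σ (own (π k)) (histList π k)

/-- The value `Val_i(v)` of vertex `v` for player `i` against the coalition of the
other players: the inf over strategies of player `i` of the sup of the costs of the
plays from `v` consistent with that strategy. -/
noncomputable def Val {V P : Type*} (E : V → V → Prop) (own : V → P)
    (w : P → V → V → ℕ) (T : P → Set V) (i : P) (v : V) : ℕ∞ :=
  ⨅ σ : {σ : List V → V // IsStrategyFor E own i σ},
    ⨆ π : {π : ℕ → V // IsPlay E π ∧ π 0 = v ∧ ConsistentFor own i σ.1 π},
      cost (w i) (T i) π.1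

/-- `π` is Visit `Val*`-consistent for the set `I` of players. -/
def VisitValConsistent {V P : Type*} (E : V → V → Prop) (own : V → P)
    (w : P → V → V → ℕ) (T : P → Set V) (I : Set P) (π : ℕ → V) : Prop :=
  ∀ i ∈ I, ∀ n, own (π n) = i → (¬ ∃ k < n, π k ∈ T i) →
    cost (w i) (T i) (fun m => π (n + m)) ≤ Val E own w T i (π n)

/-- `σ` is a `σ 0`-fixed Nash equilibrium with outcome `π` from `v0`: no player
`i ≠ 0` can strictly decrease his cost by unilaterally deviating. -/
def IsNE {V : Type*} {t : ℕ} (E : V → V → Prop) (own : V → Fin (t + 1))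
    (w : Fin (t + 1) → V → V → ℕ) (T : Fin (t + 1) → Set V) (v0 : V)
    (σ : Fin (t + 1) → List V → V) (π : ℕ → V) : Prop :=
  (∀ i, IsStrategyFor E own i (σ i)) ∧ IsPlay E π ∧ π 0 = v0 ∧
    ProfConsistent own σ π ∧
    ∀ i : Fin (t + 1), i ≠ 0 → ∀ τ : List V → V, IsStrategyFor E own i τ →
      ∀ π' : ℕ → V, IsPlay E π' → π' 0 = v0 →
        ProfConsistent own (Function.update σ i τ) π' →
        cost (w i) (T i) π ≤ cost (w i) (T i) π'


section History

variable {V : Type*}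

lemma histList_length (π : ℕ → V) (k : ℕ) : (histList π k).length = k + 1 := by
  simp [histList]

lemma histList_eq_append (π : ℕ → V) (k : ℕ) :
    histList π k = (List.range k).map π ++ [π k] := by
  simp [histList, List.range_succ]

lemma histList_succ (π : ℕ → V) (k : ℕ) :
    histList π (k + 1) = histList π k ++ [π (k + 1)] := by
  simp [histList, List.range_succ]

lemma histList_getLastD (π : ℕ → V) (k : ℕ) (d : V) : (histList π k).getLastD d = π k := by
  rw [histList_eq_append, List.getLastD_concat]

lemma histList_take (π : ℕ → V) {j k : ℕ} (h : j ≤ k) :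
    (histList π k).take (j + 1) = histList π j := by
  simp [histList, ← List.map_take, List.take_range, Nat.min_eq_left (by omega : j + 1 ≤ k + 1)]

lemma histList_drop (π : ℕ → V) (n k : ℕ) :
    (histList π (n + k)).drop n = histList (fun m => π (n + m)) k := by
  rw [histList, show n + k + 1 = n + (k + 1) by omega, List.range_add, List.map_append,
    List.drop_left' (by simp)]
  simp [histList, Function.comp_def]

lemma histList_inj {π π' : ℕ → V} {k : ℕ} :
    histList π k = histList π' k ↔ ∀ j ≤ k, π j = π' j := by
  simp [histList, List.map_inj_left]

lemma histList_prefix_iff {π π' : ℕ → V} {j k : ℕ} :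
    histList π j <+: histList π' k ↔ j ≤ k ∧ ∀ m ≤ j, π m = π' m := by
  constructor
  · intro h
    have hjk : j ≤ k := by simpa [histList_length] using h.length_le
    refine ⟨hjk, histList_inj.1 ?_⟩
    rw [List.prefix_iff_eq_take.1 h, histList_length, histList_take π' hjk]
  · rintro ⟨hjk, h⟩
    rw [histList_inj.2 h, ← histList_take π' hjk]
    exact List.take_prefix _ _

lemma isChain_histList_iff {E : V → V → Prop} {π : ℕ → V} {k : ℕ} :
    List.IsChain E (histList π k) ↔ ∀ m < k, E (π m) (π (m + 1)) := by
  rw [histList, List.isChain_map]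
  exact List.isChain_range_succ (fun a b => E (π a) (π b)) k

end History

section Cost

variable {V : Type*} (w : V → V → ℕ) (T : Set V)

lemma cost_of_mem {π : ℕ → V} (h : π 0 ∈ T) : cost w T π = 0 := by
  have hex : ∃ n, π n ∈ T := ⟨0, h⟩
  simp [cost, hex, (Nat.find_eq_zero hex).2 h, pathWeight]

lemma cost_eq_pathWeight_add {π : ℕ → V} {n : ℕ} (h : ∀ k < n, π k ∉ T) :
    cost w T π = pathWeight w π n + cost w T (fun m => π (n + m)) := by
  by_cases hex : ∃ m, π (n + m) ∈ T
  · have hex' : ∃ m, π m ∈ T := ⟨_, Nat.find_spec hex⟩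
    have hfind : Nat.find hex' = n + Nat.find hex := by
      refine (Nat.find_eq_iff hex').2 ⟨Nat.find_spec hex, fun m hm hmT => ?_⟩
      rcases Nat.lt_or_ge m n with hmn | hmn
      · exact h m hmn hmT
      · exact Nat.find_min hex (m := m - n) (by omega) (by rwa [Nat.add_sub_cancel' hmn])
    simp only [cost, dif_pos hex', dif_pos hex, hfind, pathWeight, Finset.sum_range_add]
    push_cast
    simp only [add_assoc]
  · have hex' : ¬ ∃ m, π m ∈ T := by
      rintro ⟨m, hm⟩
      rcases Nat.lt_or_ge m n with hmn | hmn
      · exact h m hmn hm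
      · exact hex ⟨m - n, by rwa [Nat.add_sub_cancel' hmn]⟩
    simp [cost, hex, hex']

lemma cost_shift_eq_add {π : ℕ → V} {m : ℕ} (h : π m ∉ T) :
    cost w T (fun k => π (m + k)) = w (π m) (π (m + 1)) + cost w T (fun k => π (m + 1 + k)) := by
  rw [cost_eq_pathWeight_add w T (n := 1) (π := fun k => π (m + k)) (by simpa)]
  simp [pathWeight, add_assoc]

lemma pathWeight_congr {π π' : ℕ → V} {n : ℕ} (h : ∀ k ≤ n, π' k = π k) :
    pathWeight w π' n = pathWeight w π n :=
  Finset.sum_congr rfl fun k hk => by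
    rw [Finset.mem_range] at hk
    rw [h k hk.le, h (k + 1) hk]

lemma cost_congr_of_mem {π π' : ℕ → V} {n k : ℕ} (h : ∀ j ≤ n, π' j = π j) (hk : k ≤ n)
    (hT : π k ∈ T) : cost w T π' = cost w T π := by
  have hex : ∃ m, π m ∈ T := ⟨k, hT⟩
  set m := Nat.find hex
  have hmn : m ≤ n := (Nat.find_le hT).trans hk
  have hm : ∀ j < m, π j ∉ T := fun j hj => Nat.find_min hex hj
  have hm' : ∀ j < m, π' j ∉ T := fun j hj => by rw [h j (by omega)]; exact hm j hj
  have hmT : π m ∈ T := Nat.find_spec hex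
  rw [cost_eq_pathWeight_add w T hm, cost_eq_pathWeight_add w T hm',
    pathWeight_congr w fun j hj => h j (hj.trans hmn),
    cost_of_mem w T (π := fun j => π (m + j)) (by simpa using hmT),
    cost_of_mem w T (π := fun j => π' (m + j)) (by simpa [h m hmn] using hmT)]

lemma cost_le_cost_iff_shift {π π' : ℕ → V} {n : ℕ} (h : ∀ k ≤ n, π' k = π k)
    (hnv : ∀ k < n, π k ∉ T) :
    cost w T π ≤ cost w T π' ↔
      cost w T (fun m => π (n + m)) ≤ cost w T (fun m => π' (n + m)) := by
  have hnv' : ∀ k < n, π' k ∉ T := fun k hk => by rw [h k hk.le]; exact hnv k hk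
  rw [cost_eq_pathWeight_add w T hnv, cost_eq_pathWeight_add w T hnv', pathWeight_congr w h]
  exact ENat.add_le_add_iff_left (by simp)

lemma le_cost_of_potential {X : V → ℕ∞} (hT : ∀ v ∈ T, X v = 0) {π : ℕ → V}
    (hstep : ∀ k, π k ∉ T → X (π k) ≤ w (π k) (π (k + 1)) + X (π (k + 1))) :
    X (π 0) ≤ cost w T π := by
  by_cases hex : ∃ n, π n ∈ T
  · have hpot : ∀ n ≤ Nat.find hex, X (π 0) ≤ pathWeight w π n + X (π n) := by
      intro n hn
      induction n with
      | zero => simp [pathWeight]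
      | succ n ih =>
        calc X (π 0) ≤ pathWeight w π n + X (π n) := ih (by omega)
          _ ≤ pathWeight w π n + (w (π n) (π (n + 1)) + X (π (n + 1))) :=
            add_le_add_right (hstep n (Nat.find_min hex (by omega))) _
          _ = pathWeight w π (n + 1) + X (π (n + 1)) := by
            simp [pathWeight, Finset.sum_range_succ, add_assoc]
    simpa [cost, hex, hT _ (Nat.find_spec hex)] using hpot _ le_rfl
  · simp [cost, hex]

end Cost

section ValueIteration

variable {V P : Type*} (E : V → V → Prop) (own : V → P) (w : P → V → V → ℕ) (T : P → Set V)
  (i : P)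

/-- `valueIter … k v` is the cost that player `i` can guarantee from `v` against the other
players when only reaching `T i` within `k` moves counts. -/
noncomputable def valueIter : ℕ → V → ℕ∞
  | 0, v => if v ∈ T i then 0 else ⊤
  | k + 1, v =>
    if v ∈ T i then 0
    else if own v = i then ⨅ u : {u // E v u}, (w i v u + valueIter k u)
    else ⨆ u : {u // E v u}, (w i v u + valueIter k u)

lemma valueIter_of_mem {k : ℕ} {v : V} (h : v ∈ T i) : valueIter E own w T i k v = 0 := by
  cases k <;> simp [valueIter, h]

lemma valueIter_succ_of_own_eq {k : ℕ} {v : V} (hv : v ∉ T i) (ho : own v = i) :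
    valueIter E own w T i (k + 1) v = ⨅ u : {u // E v u}, (w i v u + valueIter E own w T i k u) := by
  simp [valueIter, hv, ho]

lemma valueIter_succ_of_own_ne {k : ℕ} {v : V} (hv : v ∉ T i) (ho : own v ≠ i) :
    valueIter E own w T i (k + 1) v = ⨆ u : {u // E v u}, (w i v u + valueIter E own w T i k u) := by
  simp [valueIter, hv, ho]

lemma valueIter_antitone : Antitone (valueIter E own w T i) := by
  refine antitone_nat_of_succ_le fun k v => ?_
  induction k generalizing v with
  | zero => by_cases hv : v ∈ T i <;> simp [valueIter, hv]
  | succ k ih =>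
    by_cases hv : v ∈ T i
    · simp [valueIter_of_mem E own w T i hv]
    by_cases ho : own v = i
    · simp only [valueIter_succ_of_own_eq E own w T i hv ho]
      exact iInf_mono fun u => add_le_add_right (ih u) _
    · simp only [valueIter_succ_of_own_ne E own w T i hv ho]
      exact iSup_mono fun u => add_le_add_right (ih u) _

lemma exists_valueIter_stable [Finite V] :
    ∃ N, ∀ k, N ≤ k → valueIter E own w T i k = valueIter E own w T i N := by
  obtain ⟨N, hN⟩ := WellFoundedLT.antitone_chain_condition (valueIter_antitone E own w T i)
  exact ⟨N, fun k hk => (hN k hk).symm⟩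

/-- The strategy in `hcons` plays, with `j` moves left before step `k`, a successor that is
optimal for the `j`-step game. -/
lemma cost_shift_le_valueIter {g : V → ℕ → V}
    (hg : ∀ x j u, E x u →
      w i x (g x j) + valueIter E own w T i j (g x j) ≤ w i x u + valueIter E own w T i j u)
    {k : ℕ} {v : V} {ρ : ℕ → V} (hρ : IsPlay E ρ)
    (hcons : ConsistentFor own i (fun l => g (l.getLastD v) (k - l.length)) ρ) :
    ∀ j m, m + j = k →
      cost (w i) (T i) (fun s => ρ (m + s)) ≤ valueIter E own w T i j (ρ m) := by
  intro j
  induction j with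
  | zero =>
    intro m _
    by_cases hm : ρ m ∈ T i
    · simp [cost_of_mem (w i) (T i) (π := fun s => ρ (m + s)) (by simpa using hm)]
    · simp [valueIter, hm]
  | succ j ih =>
    intro m hmj
    by_cases hm : ρ m ∈ T i
    · simp [cost_of_mem (w i) (T i) (π := fun s => ρ (m + s)) (by simpa using hm)]
    rw [cost_shift_eq_add (w i) (T i) hm]
    refine (add_le_add_right (ih (m + 1) (by omega)) _).trans ?_
    by_cases ho : own (ρ m) = i
    · have hmove : ρ (m + 1) = g (ρ m) j := by
        rw [hcons m ho]
        simp only [histList_getLastD, histList_length]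
        congr 1
        omega
      rw [valueIter_succ_of_own_eq E own w T i hm ho, hmove]
      exact le_iInf fun u => hg _ _ u u.2
    · rw [valueIter_succ_of_own_ne E own w T i hm ho]
      exact le_iSup_of_le (⟨ρ (m + 1), hρ m⟩ : {u // E (ρ m) u}) le_rfl

variable {E} in
lemma val_le_valueIter [Finite V] (hE : ∀ u, ∃ v, E u v) (k : ℕ) (v : V) :
    Val E own w T i v ≤ valueIter E own w T i k v := by
  have hmin : ∀ (x : V) (j : ℕ), ∃ u, E x u ∧ ∀ u', E x u' →
      w i x u + valueIter E own w T i j u ≤ w i x u' + valueIter E own w T i j u' := by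
    intro x j
    have : Nonempty {u // E x u} := let ⟨u, hu⟩ := hE x; ⟨⟨u, hu⟩⟩
    obtain ⟨u, hu⟩ := Finite.exists_min fun u : {u // E x u} => w i x u + valueIter E own w T i j u
    exact ⟨u, u.2, fun u' hu' => hu ⟨u', hu'⟩⟩
  choose g hgE hgmin using hmin
  have hσ : IsStrategyFor E own i fun l => g (l.getLastD v) (k - l.length) :=
    fun l u _ _ => by simpa only [List.getLastD_concat] using hgE u _
  refine iInf_le_of_le ⟨_, hσ⟩ (iSup_le fun ⟨ρ, hρ, hρ0, hcons⟩ => ?_)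
  simpa [hρ0] using cost_shift_le_valueIter E own w T i hgmin hρ hcons k 0 (by omega)

variable {E} in
theorem exists_punishing_strategy [Finite V] (hE : ∀ u, ∃ v, E u v) :
    ∃ f : V → V, (∀ v, E v (f v)) ∧ ∀ ρ : ℕ → V, IsPlay E ρ →
      (∀ k, own (ρ k) ≠ i → ρ (k + 1) = f (ρ k)) →
      Val E own w T i (ρ 0) ≤ cost (w i) (T i) ρ := by
  obtain ⟨N, hN⟩ := exists_valueIter_stable E own w T i
  set X := valueIter E own w T i N
  have hfix : valueIter E own w T i (N + 1) = X := hN _ (by omega)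
  have hmax : ∀ v, ∃ u, E v u ∧ ∀ u', E v u' → w i v u' + X u' ≤ w i v u + X u := by
    intro v
    have : Nonempty {u // E v u} := let ⟨u, hu⟩ := hE v; ⟨⟨u, hu⟩⟩
    obtain ⟨u, hu⟩ := Finite.exists_max fun u : {u // E v u} => w i v u + X u
    exact ⟨u, u.2, fun u' hu' => hu ⟨u', hu'⟩⟩
  choose f hfE hfmax using hmax
  refine ⟨f, hfE, fun ρ hρ hf => (val_le_valueIter own w T i hE N _).trans ?_⟩
  refine le_cost_of_potential (w i) (T i) (fun v hv => valueIter_of_mem E own w T i hv)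
    fun k hk => ?_
  calc X (ρ k) = valueIter E own w T i (N + 1) (ρ k) := by rw [hfix]
    _ ≤ w i (ρ k) (ρ (k + 1)) + X (ρ (k + 1)) := by
      by_cases ho : own (ρ k) = i
      · rw [valueIter_succ_of_own_eq E own w T i hk ho]
        exact iInf_le_of_le ⟨ρ (k + 1), hρ k⟩ le_rfl
      · rw [valueIter_succ_of_own_ne E own w T i hk ho, hf k ho]
        exact iSup_le fun u => hfmax _ u u.2

end ValueIteration

section Outcome

variable {V P : Type*} {E : V → V → Prop} {own : V → P}

lemma IsPlay.shift {π : ℕ → V} (h : IsPlay E π) (n : ℕ) : IsPlay E (fun m => π (n + m)) :=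
  fun k => by simpa only [← add_assoc] using h (n + k)

lemma isPlay_of_profConsistent {σ : P → List V → V} (hσ : ∀ j, IsStrategyFor E own j (σ j))
    {π : ℕ → V} (hπ : ProfConsistent own σ π) : IsPlay E π := by
  intro k
  induction k using Nat.strong_induction_on with
  | _ k ih =>
    have hchain : List.IsChain E ((List.range k).map π ++ [π k]) := by
      rw [← histList_eq_append]
      exact isChain_histList_iff.2 ih
    simpa only [← histList_eq_append, ← hπ k] using hσ (own (π k)) _ _ hchain rfl

def outcomeHist (own : V → P) (σ : P → List V → V) (v0 : V) : ℕ → List V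
  | 0 => [v0]
  | k + 1 => outcomeHist own σ v0 k ++
      [σ (own ((outcomeHist own σ v0 k).getLastD v0)) (outcomeHist own σ v0 k)]

lemma exists_profConsistent (σ : P → List V → V) (v0 : V) :
    ∃ π : ℕ → V, π 0 = v0 ∧ ProfConsistent own σ π := by
  let π : ℕ → V := fun k => (outcomeHist own σ v0 k).getLastD v0
  have hhist : ∀ k, histList π k = outcomeHist own σ v0 k := by
    intro k
    induction k with
    | zero => rfl
    | succ k ih =>
      rw [histList_succ, ih]
      simp only [π, outcomeHist, List.getLastD_concat]
  refine ⟨π, rfl, fun k => ?_⟩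
  rw [hhist]
  simp only [π, outcomeHist, List.getLastD_concat]

lemma eq_of_profConsistent_of_agree {σ σ' : P → List V → V} {π π' : ℕ → V}
    (hπ : ProfConsistent own σ π) (hπ' : ProfConsistent own σ' π') (h0 : π' 0 = π 0) {n : ℕ}
    (hag : ∀ k < n, σ' (own (π k)) (histList π k) = σ (own (π k)) (histList π k)) :
    ∀ k ≤ n, π' k = π k := by
  intro k
  induction k using Nat.strong_induction_on with
  | _ k ih =>
    intro hk
    cases k with
    | zero => exact h0
    | succ k =>
      have hhist : histList π' k = histList π k :=
        histList_inj.2 fun j hj => ih j (by omega) (by omega)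
      rw [hπ' k, hπ k, ih k (by omega) (by omega), hhist, hag k (by omega)]

lemma exists_first_ne {π π' : ℕ → V} (h0 : π' 0 = π 0) (hne : π' ≠ π) :
    ∃ n, (∀ k ≤ n, π' k = π k) ∧ π' (n + 1) ≠ π (n + 1) := by
  have hex : ∃ k, π' k ≠ π k := by
    by_contra! h
    exact hne (funext h)
  have hpos : Nat.find hex ≠ 0 := fun h => (h ▸ Nat.find_spec hex) h0
  refine ⟨Nat.find hex - 1, fun k hk => not_not.1 (Nat.find_min hex (by omega)), ?_⟩
  rw [Nat.sub_add_cancel (Nat.one_le_iff_ne_zero.2 hpos)]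
  exact Nat.find_spec hex

end Outcome

section Deviation

variable {V P : Type*} {E : V → V → Prop} {own : V → P} {i : P}

noncomputable def deviateAfter (π : ℕ → V) (n : ℕ) (σ' τ : List V → V) : List V → V := fun l =>
  if histList π n <+: l then σ' (l.drop n) else τ l

lemma isStrategyFor_deviateAfter {σ' τ : List V → V} (hσ' : IsStrategyFor E own i σ')
    (hτ : IsStrategyFor E own i τ) (π : ℕ → V) (n : ℕ) :
    IsStrategyFor E own i (deviateAfter π n σ' τ) := by
  intro l u hchain ho
  unfold deviateAfter
  split_ifs with hpre
  · have hn : n ≤ l.length := by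
      have := hpre.length_le
      simp only [histList_length, List.length_append, List.length_singleton] at this
      omega
    rw [List.drop_append_of_le_length hn]
    refine hσ' _ u ?_ ho
    rw [← List.drop_append_of_le_length hn]
    exact hchain.suffix (List.drop_suffix _ _)
  · exact hτ l u hchain ho

lemma exists_deviation_outcome [DecidableEq P] {σ : P → List V → V} {π : ℕ → V}
    (hσ : ∀ j, IsStrategyFor E own j (σ j)) (hprof : ProfConsistent own σ π)
    {σ' : List V → V} (hσ' : IsStrategyFor E own i σ') (n : ℕ) :
    ∃ π', IsPlay E π' ∧ π' 0 = π 0 ∧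
      ProfConsistent own (Function.update σ i (deviateAfter π n σ' (σ i))) π' ∧
      (∀ k ≤ n, π' k = π k) ∧ ConsistentFor own i σ' (fun m => π' (n + m)) := by
  set τ := deviateAfter π n σ' (σ i)
  have hupd : ∀ j, IsStrategyFor E own j (Function.update σ i τ j) := by
    intro j
    rcases eq_or_ne j i with rfl | hj
    · simpa using isStrategyFor_deviateAfter hσ' (hσ j) π n
    · simpa [Function.update_of_ne hj] using hσ j
  obtain ⟨π', hπ'0, hprof'⟩ := exists_profConsistent (own := own) (Function.update σ i τ) (π 0)
  have hag : ∀ k ≤ n, π' k = π k :=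
    eq_of_profConsistent_of_agree hprof hprof' hπ'0 fun k hk => by
      rcases eq_or_ne (own (π k)) i with ho | ho
      · have hpre : ¬ histList π n <+: histList π k := fun h =>
          absurd (histList_prefix_iff.1 h).1 (by omega)
        simp [ho, τ, deviateAfter, hpre]
      · rw [Function.update_of_ne ho]
  refine ⟨π', isPlay_of_profConsistent hupd hprof', hπ'0, hprof', hag, fun k hk => ?_⟩
  have hpre : histList π n <+: histList π' (n + k) :=
    histList_prefix_iff.2 ⟨by omega, fun m hm => (hag m hm).symm⟩
  simp only at hk ⊢
  rw [← add_assoc, hprof' (n + k), hk, Function.update_self]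
  simp only [τ, deviateAfter, if_pos hpre, histList_drop]

theorem IsNE.visitValConsistent {t : ℕ} {own : V → Fin (t + 1)} {w : Fin (t + 1) → V → V → ℕ}
    {T : Fin (t + 1) → Set V} {v0 : V} {σ : Fin (t + 1) → List V → V} {π : ℕ → V}
    (hNE : IsNE E own w T v0 σ π) : VisitValConsistent E own w T {i | i ≠ 0} π := by
  obtain ⟨hσ, -, h0, hprof, hdev⟩ := hNE
  intro i hi n hown hnv
  by_contra hlt
  obtain ⟨⟨σ', hσ'⟩, hsup⟩ := iInf_lt_iff.1 (not_le.1 hlt)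
  obtain ⟨π', hπ', hπ'0, hprof', hag, hcons⟩ := exists_deviation_outcome hσ hprof hσ' n
  have hshift := (cost_le_cost_iff_shift (w i) (T i) hag fun k hk hT => hnv ⟨k, hk, hT⟩).1
    (hdev i hi _ (isStrategyFor_deviateAfter hσ' (hσ i) π n) π' hπ' (hπ'0.trans h0) hprof')
  have hbound : cost (w i) (T i) (fun m => π' (n + m)) < cost (w i) (T i) (fun m => π (n + m)) :=
    lt_of_le_of_lt (le_iSup_of_le ⟨_, hπ'.shift n, by simpa using hag n le_rfl, hcons⟩ le_rfl)
      hsup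
  exact absurd hshift (not_le.2 hbound)

end Deviation

section Punishment

variable {V P : Type*} {E : V → V → Prop} {own : V → P}

/-- Play `π` while the history is a prefix of it; after a deviation, punish with `f j` the owner
`j` of the last vertex the history shares with `π`. -/
noncomputable def followOrPunish (π : ℕ → V) (own : V → P) (f : P → V → V) : List V → V :=
  fun l => if ∃ m, l = histList π m then π l.length
    else f (own (π (Nat.findGreatest (fun j => histList π j <+: l) l.length))) (l.getLastD (π 0))

lemma followOrPunish_histList (π : ℕ → V) (f : P → V → V) (m : ℕ) :
    followOrPunish π own f (histList π m) = π (m + 1) := by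
  simp [followOrPunish, histList_length]

lemma followOrPunish_of_deviation (f : P → V → V) {π π' : ℕ → V} {n m : ℕ}
    (hag : ∀ k ≤ n, π' k = π k) (hne : π' (n + 1) ≠ π (n + 1)) (hm : n + 1 ≤ m) :
    followOrPunish π own f (histList π' m) = f (own (π n)) (π' m) := by
  have hoff : ¬ ∃ m', histList π' m = histList π m' := by
    rintro ⟨m', h⟩
    obtain rfl : m = m' := by simpa [histList_length] using congrArg List.length h
    exact hne (histList_inj.1 h (n + 1) hm)
  have hlast : Nat.findGreatest (fun j => histList π j <+: histList π' m)
      (histList π' m).length = n := by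
    rw [Nat.findGreatest_eq_iff]
    refine ⟨by rw [histList_length]; omega,
      fun _ => histList_prefix_iff.2 ⟨by omega, fun k hk => (hag k hk).symm⟩,
      fun k hnk _ hpre => hne ((histList_prefix_iff.1 hpre).2 (n + 1) hnk).symm⟩
  simp only [followOrPunish, if_neg hoff, hlast, histList_getLastD]

lemma isStrategyFor_followOrPunish {π : ℕ → V} (hπ : IsPlay E π) {f : P → V → V}
    (hf : ∀ j v, E v (f j v)) (j : P) : IsStrategyFor E own j (followOrPunish π own f) := by
  intro l u _ _
  unfold followOrPunish
  split_ifs with h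
  · obtain ⟨m, hm⟩ := h
    have hu : u = π m := by
      simpa only [List.getLastD_concat, histList_getLastD] using congrArg (·.getLastD u) hm
    rw [hm, histList_length, hu]
    exact hπ m
  · rw [List.getLastD_concat]
    exact hf _ u

theorem exists_isNE_of_visitValConsistent [Finite V] {t : ℕ} {own : V → Fin (t + 1)}
    {w : Fin (t + 1) → V → V → ℕ} {T : Fin (t + 1) → Set V} {v0 : V} {π : ℕ → V}
    (hE : ∀ u, ∃ v, E u v) (hπ : IsPlay E π) (h0 : π 0 = v0)
    (hc : VisitValConsistent E own w T {i | i ≠ 0} π) :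
    ∃ σ : Fin (t + 1) → List V → V, IsNE E own w T v0 σ π := by
  choose f hfE hf using fun i => exists_punishing_strategy own w T i hE
  refine ⟨fun _ => followOrPunish π own f, fun j => isStrategyFor_followOrPunish hπ hfE j, hπ,
    h0, fun k => (followOrPunish_histList π f k).symm, ?_⟩
  intro i hi τ _ π' hπ' hπ'0 hprof'
  obtain rfl | hne := eq_or_ne π' π
  · exact le_rfl
  obtain ⟨n, hag, hdiff⟩ := exists_first_ne (hπ'0.trans h0.symm) hne
  have hown : own (π n) = i := by
    by_contra ho
    apply hdiff
    rw [hprof' n, hag n le_rfl, Function.update_of_ne ho, histList_inj.2 hag,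
      followOrPunish_histList]
  by_cases hvis : ∃ k < n, π k ∈ T i
  · obtain ⟨k, hk, hkT⟩ := hvis
    exact (cost_congr_of_mem (w i) (T i) hag hk.le hkT).ge
  rw [cost_le_cost_iff_shift (w i) (T i) hag fun k hk hT => hvis ⟨k, hk, hT⟩]
  refine (hc i hi n hown hvis).trans ?_
  -- `i` himself moves at `π' n`, so the punishment constrains only steps `k ≥ 1`
  have hpun : ∀ k, own (π' (n + k)) ≠ i → π' (n + k + 1) = f i (π' (n + k)) := by
    intro k hk
    have hk1 : 1 ≤ k := Nat.one_le_iff_ne_zero.2 fun h => hk (by simpa [h, hag n le_rfl])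
    rw [hprof' (n + k), Function.update_of_ne hk,
      followOrPunish_of_deviation f hag hdiff (by omega), hown]
  simpa [hag n le_rfl] using hf i _ (hπ'.shift n) fun k => by simpa only [← add_assoc] using hpun k

end Punishment

/-- A play `π` from `v0` is the outcome of a `σ0`-fixed Nash equilibrium for some
strategy `σ0` of player 0 iff `π` is Visit `Val*`-consistent for the players `≠ 0`. -/
theorem ne_outcome_characterization {V : Type*} [Fintype V] {t : ℕ}
    (E : V → V → Prop) (hE : ∀ u, ∃ v, E u v) (own : V → Fin (t + 1))
    (w : Fin (t + 1) → V → V → ℕ) (T : Fin (t + 1) → Set V) (v0 : V)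
    (π : ℕ → V) (hπ : IsPlay E π) (h0 : π 0 = v0) :
    (∃ σ : Fin (t + 1) → List V → V, IsNE E own w T v0 σ π) ↔
      VisitValConsistent E own w T {i | i ≠ 0} π :=
  ⟨fun ⟨_, hNE⟩ => hNE.visitValConsistent, exists_isNE_of_visitValConsistent hE hπ h0⟩
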